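/- With F_{1,i} as in the recursion F_{1,1} = P^+ D^{-1} L_k, F_{1,i+1} = P^+ D^{-1} P^- D^{-1} F_{1,i}, the function \bar F_{1,i} := P^- D^{-1} F_{1,i} admits a representation \bar F_{1,i} = Σ_{m=k-2i+1}^{k} β_{i,m} (L_m - L_{m-1}) for constants β_{i,m}; in particular \bar F_{1,i}(1) = 0. -/

import Mathlib

open Polynomial Finset

/-- Legendre polynomial of degree `m` on `[-1,1]`, normalized so `L_m(1) = 1`. -/
noncomputable def leg (m : ℕ) : Polynomial ℝ :=
  Polynomial.C (((2 : ℝ) ^ m * Nat.factorial m)⁻¹) *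
    (fun p => Polynomial.derivative p)^[m] ((Polynomial.X ^ 2 - 1) ^ m)

/-- The antiderivative operator `D⁻¹ v (s) = ∫_{-1}^s v`. -/
noncomputable def Dinv (v : ℝ → ℝ) (s : ℝ) : ℝ := ∫ t in (-1 : ℝ)..s, v t

/-- Degree-`k` right Gauss–Radau projection on `[-1,1]`. -/
def IsRadauNeg (k : ℕ) (v : ℝ → ℝ) (p : Polynomial ℝ) : Prop :=
  p.natDegree ≤ k ∧
  (∀ w : Polynomial ℝ, w.natDegree + 1 ≤ k →
    ∫ s in (-1 : ℝ)..1, (v s - p.eval s) * w.eval s = 0) ∧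
  p.eval 1 = v 1

/-- Degree-`k` left Gauss–Radau projection on `[-1,1]`. -/
def IsRadauPos (k : ℕ) (v : ℝ → ℝ) (p : Polynomial ℝ) : Prop :=
  p.natDegree ≤ k ∧
  (∀ w : Polynomial ℝ, w.natDegree + 1 ≤ k →
    ∫ s in (-1 : ℝ)..1, (v s - p.eval s) * w.eval s = 0) ∧
  p.eval (-1) = v (-1)

/-!
Write `ℙₙ` for the polynomials of degree `< n`. If `p ⊥ ℙₙ₊₁` on `[-1,1]`, then `D⁻¹p` vanishes
at both endpoints (`D⁻¹p(1) = ∫ p · 1`), so one integration by parts gives `D⁻¹p ⊥ ℙₙ`. Each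
Radau projection differs from its argument by something orthogonal to `ℙₖ`, so it keeps this
orthogonality when `n ≤ k`. Starting from `L_k ⊥ ℙₖ`, induction gives `F_{1,i} ⊥ ℙ_{k-2i+1}`,
`F̄_{1,i} ⊥ ℙ_{k-2i}` and `F̄_{1,i}(1) = D⁻¹F_{1,i}(1) = 0`.

A polynomial of degree `≤ k` that is orthogonal to `ℙₙ` and vanishes at `1` lies in the span of
the `L_m - L_{m-1}`, `n < m ≤ k`: subtracting a multiple of `L_k - L_{k-1}` removes the top
coefficient and keeps both properties, and in degree `n` only a multiple of `L_n` is left, which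
vanishes since `L_n(1) = 1`.
-/

noncomputable def antideriv (p : ℝ[X]) : ℝ[X] :=
  ∑ n ∈ range (p.natDegree + 1), C (p.coeff n / (n + 1)) * (X ^ (n + 1) - C ((-1) ^ (n + 1)))

theorem derivative_antideriv (p : ℝ[X]) : derivative (antideriv p) = p := by
  conv_rhs => rw [p.as_sum_range_C_mul_X_pow]
  refine (map_sum _ _ _).trans (sum_congr rfl fun n _ => ?_)
  rw [derivative_C_mul, derivative_sub, derivative_C, sub_zero, derivative_X_pow, ← mul_assoc,
    ← C_mul, Nat.add_sub_cancel]
  congr 2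
  push_cast
  field_simp

theorem antideriv_eval_neg_one (p : ℝ[X]) : (antideriv p).eval (-1) = 0 := by
  simp [antideriv, eval_finsetSum]

theorem natDegree_antideriv_le (p : ℝ[X]) : (antideriv p).natDegree ≤ p.natDegree + 1 := by
  refine natDegree_sum_le_of_forall_le _ _ fun n hn => (natDegree_C_mul_le _ _).trans ?_
  refine (natDegree_sub_le _ _).trans ?_
  simp only [natDegree_X_pow, natDegree_C]
  have := mem_range.mp hn
  omega

theorem integral_eval_derivative (p : ℝ[X]) (a b : ℝ) :
    ∫ x in a..b, (derivative p).eval x = p.eval b - p.eval a :=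
  intervalIntegral.integral_eq_sub_of_hasDerivAt (fun x _ => p.hasDerivAt x)
    (p.derivative.continuous.intervalIntegrable _ _)

theorem Dinv_eval (p : ℝ[X]) : Dinv (fun t => p.eval t) = fun s => (antideriv p).eval s := by
  funext s
  rw [Dinv, ← derivative_antideriv p, integral_eval_derivative, derivative_antideriv,
    antideriv_eval_neg_one, sub_zero]

theorem integral_derivative_mul_eval (p q : ℝ[X]) (a b : ℝ) :
    ∫ x in a..b, (derivative p).eval x * q.eval x
      = p.eval b * q.eval b - p.eval a * q.eval a
          - ∫ x in a..b, p.eval x * (derivative q).eval x := by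
  have h := integral_eval_derivative (p * q) a b
  simp only [derivative_mul, eval_add, eval_mul] at h
  rw [intervalIntegral.integral_add
    ((p.derivative.continuous.fun_mul q.continuous).intervalIntegrable _ _)
    ((p.continuous.fun_mul q.derivative.continuous).intervalIntegrable _ _)] at h
  linarith

def orthDegreeLT (n : ℕ) : Submodule ℝ ℝ[X] where
  carrier := {p | ∀ w : ℝ[X], w.natDegree < n → ∫ s in (-1 : ℝ)..1, p.eval s * w.eval s = 0}
  zero_mem' _ _ := by simp
  add_mem' {p q} hp hq w hw := by
    simp only [eval_add, add_mul]
    rw [intervalIntegral.integral_add ((p.continuous.fun_mul w.continuous).intervalIntegrable _ _)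
      ((q.continuous.fun_mul w.continuous).intervalIntegrable _ _), hp w hw, hq w hw, add_zero]
  smul_mem' c p hp w hw := by
    simp only [eval_smul, smul_eq_mul, mul_assoc]
    rw [intervalIntegral.integral_const_mul, hp w hw, mul_zero]

theorem orthDegreeLT_anti : Antitone orthDegreeLT :=
  fun _ _ hmn _ hp w hw => hp w (hw.trans_le hmn)

theorem eval_one_antideriv_eq_zero {p : ℝ[X]} (hp : p ∈ orthDegreeLT 1) :
    (antideriv p).eval 1 = 0 := by
  have h := hp 1 (by simp)
  simp only [eval_one, mul_one] at h
  rwa [← derivative_antideriv p, integral_eval_derivative,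
    antideriv_eval_neg_one, sub_zero] at h

theorem antideriv_mem_orthDegreeLT {n : ℕ} {p : ℝ[X]} (hp : p ∈ orthDegreeLT (n + 1)) :
    antideriv p ∈ orthDegreeLT n := by
  intro w hw
  have hibp := integral_derivative_mul_eval (antideriv p) (antideriv w) (-1) 1
  rw [derivative_antideriv, derivative_antideriv, antideriv_eval_neg_one,
    eval_one_antideriv_eq_zero (orthDegreeLT_anti (by omega) hp),
    hp _ (by have := natDegree_antideriv_le w; omega)] at hibp
  linarith

theorem mem_orthDegreeLT_of_residual {n k : ℕ} {p q : ℝ[X]} (hp : p ∈ orthDegreeLT (n + 1))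
    (hres : ∀ w : ℝ[X], w.natDegree + 1 ≤ k →
      ∫ s in (-1 : ℝ)..1, (Dinv (fun t => p.eval t) s - q.eval s) * w.eval s = 0)
    (hn : n ≤ k) : q ∈ orthDegreeLT n := by
  have hres' : antideriv p - q ∈ orthDegreeLT k := fun w hw => by
    simpa only [Dinv_eval, eval_sub] using hres w hw
  simpa using sub_mem (antideriv_mem_orthDegreeLT hp) (orthDegreeLT_anti hn hres')

theorem IsRadauNeg.mem_orthDegreeLT {n k : ℕ} {p q : ℝ[X]}
    (h : IsRadauNeg k (Dinv fun t => p.eval t) q) (hp : p ∈ orthDegreeLT (n + 1)) (hn : n ≤ k) :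
    q ∈ orthDegreeLT n :=
  mem_orthDegreeLT_of_residual hp h.2.1 hn

theorem IsRadauPos.mem_orthDegreeLT {n k : ℕ} {p q : ℝ[X]}
    (h : IsRadauPos k (Dinv fun t => p.eval t) q) (hp : p ∈ orthDegreeLT (n + 1)) (hn : n ≤ k) :
    q ∈ orthDegreeLT n :=
  mem_orthDegreeLT_of_residual hp h.2.1 hn

theorem integral_iterate_derivative_mul_eval {a b : ℝ} (m : ℕ) {u : ℝ[X]}
    (hu : ∀ j < m, (derivative^[j] u).eval a = 0 ∧ (derivative^[j] u).eval b = 0) (w : ℝ[X]) :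
    ∫ s in a..b, (derivative^[m] u).eval s * w.eval s
      = (-1) ^ m * ∫ s in a..b, u.eval s * (derivative^[m] w).eval s := by
  induction m generalizing u with
  | zero => simp
  | succ m ih =>
    obtain ⟨hua, hub⟩ : u.eval a = 0 ∧ u.eval b = 0 := hu 0 m.succ_pos
    rw [Function.iterate_succ_apply, ih (fun j hj => hu (j + 1) (by omega)),
      integral_derivative_mul_eval, hua, hub, ← Function.iterate_succ_apply' derivative]
    ring

theorem eval_iterate_derivative_eq_zero_of_pow_dvd {R : Type*} [CommRing R] {p : R[X]} {t : R}
    {m j : ℕ} (h : (X - C t) ^ m ∣ p) (hj : j < m) : (derivative^[j] p).eval t = 0 :=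
  dvd_iff_isRoot.mp <| (dvd_pow_self _ (Nat.sub_ne_zero_of_lt hj)).trans
    (pow_sub_dvd_iterate_derivative_of_pow_dvd j h)

theorem eval_iterate_derivative_X_sub_C_pow_mul {R : Type*} [CommRing R] (m : ℕ) (t : R)
    (g : R[X]) : (derivative^[m] ((X - C t) ^ m * g)).eval t = m.factorial * g.eval t := by
  rw [iterate_derivative_mul, eval_finsetSum, sum_eq_single_of_mem 0 (by simp)]
  · simp [iterate_derivative_X_sub_pow_self]
  · intro j hj hj0
    simp [iterate_derivative_X_sub_pow, Nat.sub_sub_self (mem_range_succ_iff.mp hj), hj0]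

theorem X_sq_sub_one_pow {R : Type*} [CommRing R] (m : ℕ) :
    ((X : R[X]) ^ 2 - 1) ^ m = (X - C 1) ^ m * (X - C (-1)) ^ m := by
  rw [← mul_pow]
  congr 1
  simp only [C_1, C_neg]
  ring

theorem leg_eval_one (m : ℕ) : (leg m).eval 1 = 1 := by
  rw [leg, eval_mul, eval_C, X_sq_sub_one_pow, eval_iterate_derivative_X_sub_C_pow_mul]
  norm_num
  field_simp

theorem leg_mem_orthDegreeLT (m : ℕ) : leg m ∈ orthDegreeLT m := by
  intro w hw
  have hu : ∀ j < m, (derivative^[j] (((X : ℝ[X]) ^ 2 - 1) ^ m)).eval (-1) = 0 ∧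
      (derivative^[j] (((X : ℝ[X]) ^ 2 - 1) ^ m)).eval 1 = 0 := fun j hj => by
    rw [X_sq_sub_one_pow]
    exact ⟨eval_iterate_derivative_eq_zero_of_pow_dvd (dvd_mul_left _ _) hj,
      eval_iterate_derivative_eq_zero_of_pow_dvd (dvd_mul_right _ _) hj⟩
  simp only [leg, eval_mul, eval_C, mul_assoc]
  rw [intervalIntegral.integral_const_mul, integral_iterate_derivative_mul_eval m hu,
    iterate_derivative_eq_zero hw]
  simp

theorem monic_X_sq_sub_one_pow (m : ℕ) : (((X : ℝ[X]) ^ 2 - 1) ^ m).Monic := by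
  simpa using (monic_X_pow_sub_C (1 : ℝ) two_ne_zero).pow m

theorem natDegree_X_sq_sub_one_pow (m : ℕ) : (((X : ℝ[X]) ^ 2 - 1) ^ m).natDegree = 2 * m := by
  rw [natDegree_pow, ← C_1, natDegree_X_pow_sub_C, mul_comm]

theorem natDegree_leg_le (m : ℕ) : (leg m).natDegree ≤ m := by
  refine (natDegree_C_mul_le _ _).trans ((natDegree_iterate_derivative _ _).trans ?_)
  rw [natDegree_X_sq_sub_one_pow]
  omega

theorem coeff_leg_self_ne_zero (m : ℕ) : (leg m).coeff m ≠ 0 := by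
  have hlead : (((X : ℝ[X]) ^ 2 - 1) ^ m).coeff (m + m) = 1 := by
    have h := (monic_X_sq_sub_one_pow m).coeff_natDegree
    rwa [natDegree_X_sq_sub_one_pow, two_mul] at h
  rw [leg, coeff_C_mul, coeff_iterate_derivative, hlead, nsmul_one]
  have := Nat.descFactorial_pos.mpr (Nat.le_add_left m m)
  positivity

theorem eq_zero_of_mem_orthDegreeLT {n : ℕ} {p : ℝ[X]} (hp : p ∈ orthDegreeLT n)
    (hdeg : p.degree < n) : p = 0 := by
  by_contra hne
  obtain ⟨c, hc, hpc⟩ : ∃ c ∈ Set.Icc (-1 : ℝ) 1, p.eval c ≠ 0 := by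
    by_contra! h
    exact hne (p.eq_zero_of_infinite_isRoot ((Set.Icc_infinite (by norm_num)).mono h))
  have hpos := intervalIntegral.integral_pos (by norm_num)
    (p.continuous.fun_mul p.continuous).continuousOn (fun x _ => mul_self_nonneg (p.eval x))
    ⟨c, hc, mul_self_pos.mpr hpc⟩
  exact hpos.ne' (hp p ((natDegree_lt_iff_degree_lt hne).mpr hdeg))

theorem exists_degree_sub_smul_leg_lt {k : ℕ} {p : ℝ[X]} (hp : p.degree ≤ k) :
    ∃ a : ℝ, (p - a • leg k).degree < k := by
  refine ⟨p.coeff k / (leg k).coeff k, (degree_lt_iff_coeff_zero _ _).mpr fun m hm => ?_⟩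
  rcases hm.eq_or_lt with rfl | hlt
  · simp [div_mul_cancel₀ _ (coeff_leg_self_ne_zero k)]
  · rw [coeff_sub, coeff_smul, coeff_eq_zero_of_degree_lt (hp.trans_lt (by exact_mod_cast hlt)),
      coeff_eq_zero_of_natDegree_lt ((natDegree_leg_le k).trans_lt hlt), smul_zero, sub_zero]

theorem exists_eq_sum_smul_leg_sub_leg {n k : ℕ} (hnk : n ≤ k) {p : ℝ[X]} (hdeg : p.degree ≤ k)
    (horth : p ∈ orthDegreeLT n) (h1 : p.eval 1 = 0) :
    ∃ β : ℕ → ℝ, p = ∑ m ∈ Icc (n + 1) k, β m • (leg m - leg (m - 1)) := by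
  induction k, hnk using Nat.le_induction generalizing p with
  | base =>
    obtain ⟨a, ha⟩ := exists_degree_sub_smul_leg_lt hdeg
    have hpa : p = a • leg n := sub_eq_zero.mp <| eq_zero_of_mem_orthDegreeLT
      (sub_mem horth (Submodule.smul_mem _ a (leg_mem_orthDegreeLT n))) ha
    have ha0 : a = 0 := by simpa [hpa, leg_eval_one] using h1
    exact ⟨0, by simp [hpa, ha0]⟩
  | succ k hnk ih =>
    obtain ⟨a, ha⟩ := exists_degree_sub_smul_leg_lt hdeg
    set q := p - a • (leg (k + 1) - leg k) with hq
    have hqdeg : q.degree ≤ k := by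
      rw [show q = (p - a • leg (k + 1)) + a • leg k by rw [hq]; module]
      exact (degree_add_le _ _).trans <| max_le (Order.le_of_lt_succ ha) <|
        (degree_smul_le _ _).trans (degree_le_of_natDegree_le (natDegree_leg_le k))
    have hqorth : q ∈ orthDegreeLT n := sub_mem horth <| Submodule.smul_mem _ a <|
      sub_mem (orthDegreeLT_anti (by omega) (leg_mem_orthDegreeLT _))
        (orthDegreeLT_anti hnk (leg_mem_orthDegreeLT _))
    have hq1 : q.eval 1 = 0 := by simp [hq, h1, leg_eval_one]
    obtain ⟨β, hβ⟩ := ih hqdeg hqorth hq1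
    refine ⟨Function.update β (k + 1) a, ?_⟩
    rw [sum_Icc_succ_top (by omega), Function.update_self, Nat.add_sub_cancel,
      sum_congr rfl fun m hm => by rw [Function.update_of_ne (by grind)], ← hβ, hq, sub_add_cancel]

theorem barF1i_representation_general (k : ℕ) (F G : ℕ → Polynomial ℝ)
    (hF1 : IsRadauPos k (Dinv fun t => (leg k).eval t) (F 1))
    (hG : ∀ i, IsRadauNeg k (Dinv fun t => (F i).eval t) (G i))
    (hFsucc : ∀ i, IsRadauPos k (Dinv fun t => (G i).eval t) (F (i + 1))) :
    ∀ i, 1 ≤ i → i ≤ k / 2 →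
      (∃ β : ℕ → ℝ, G i = ∑ m ∈ Finset.Icc (k + 1 - 2 * i) k, β m • (leg m - leg (m - 1))) ∧
      (G i).eval 1 = 0 := by
  have hF : ∀ i, 1 ≤ i → 2 * i ≤ k → F i ∈ orthDegreeLT (k - 2 * i + 1) := by
    intro i hi
    induction i, hi using Nat.le_induction with
    | base =>
      exact fun _ => hF1.mem_orthDegreeLT (orthDegreeLT_anti (by omega) (leg_mem_orthDegreeLT k))
        (by omega)
    | succ i hi ih =>
      intro hik
      have hGi : G i ∈ orthDegreeLT (k - 2 * i) :=
        (hG i).mem_orthDegreeLT (ih (by omega)) (by omega)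
      exact (hFsucc i).mem_orthDegreeLT (orthDegreeLT_anti (by omega) hGi) (by omega)
  intro i hi hik
  have hFi := hF i hi (by omega)
  have hG1 : (G i).eval 1 = 0 := by
    rw [(hG i).2.2, Dinv_eval]
    exact eval_one_antideriv_eq_zero (orthDegreeLT_anti (by omega) hFi)
  refine ⟨?_, hG1⟩
  rw [show k + 1 - 2 * i = k - 2 * i + 1 by omega]
  exact exists_eq_sum_smul_leg_sub_leg (k.sub_le _) (degree_le_of_natDegree_le (hG i).1)
    ((hG i).mem_orthDegreeLT hFi (k.sub_le _)) hG1

/-- Structure of `F̄_{1,i} := P⁻ D⁻¹ F_{1,i}` (here `G i`), where `F_{1,1} = P⁺D⁻¹L_k` and `F_{1,i+1} = P⁺D⁻¹P⁻D⁻¹F_{1,i}`. -/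
theorem barF1i_representation (k : ℕ) (hk : 2 ≤ k) (F G : ℕ → Polynomial ℝ)
    (hF1 : IsRadauPos k (Dinv fun t => (leg k).eval t) (F 1))
    (hG : ∀ i, IsRadauNeg k (Dinv fun t => (F i).eval t) (G i))
    (hFsucc : ∀ i, IsRadauPos k (Dinv fun t => (G i).eval t) (F (i + 1))) :
    ∀ i, 1 ≤ i → i ≤ k / 2 →
      (∃ β : ℕ → ℝ, G i = ∑ m ∈ Finset.Icc (k + 1 - 2 * i) k, β m • (leg m - leg (m - 1))) ∧
      (G i).eval 1 = 0 :=
  barF1i_representation_general k F G hF1 hG hFsucc
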